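/- If a greedy assignment procedure adds points one at a time to groups, only allowing an addition to a group when the group has fewer than α users, and prioritizes groups with fewer than k users, then upon successful termination every group has at most α users; and if the procedure terminates with all m points assigned and m ≥ Kk, then a group with fewer than k users can only exist if some prioritized assignment was blocked, hence under the feasibility condition Kk ≤ m ≤ Kα and unrestricted distances the procedure outputs a partition satisfying k ≤ |U_ỹ| ≤ α for all groups. -/
import Mathlib


open Finset

/-- The number of points among the first `n` (in assignment order) that the
greedy procedure has placed in group `j`. -/
def groupSize (m K : ℕ) (g : Fin m → Fin K) (n : ℕ) (j : Fin K) : ℕ :=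
  (Finset.univ.filter (fun i : Fin m => i.val < n ∧ g i = j)).card

lemma groupSize_mono (m K : ℕ) (g : Fin m → Fin K) {n n' : ℕ} (h : n ≤ n') (j : Fin K) :
    groupSize m K g n j ≤ groupSize m K g n' j := by
  apply Finset.card_le_card
  intro i hi
  simp only [mem_filter, mem_univ, true_and] at *
  exact ⟨lt_of_lt_of_le hi.1 h, hi.2⟩

lemma groupSize_le_cap (m K k α : ℕ) (g : Fin m → Fin K)
    (hcap : ∀ t : Fin m, groupSize m K g t.val (g t) < α)
    (j : Fin K) : ∀ n, groupSize m K g n j ≤ α := by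
  intro n
  induction n with
  | zero =>
    have : groupSize m K g 0 j = 0 := by
      unfold groupSize
      simp
    omega
  | succ n ih =>
    by_cases hex : ∃ t : Fin m, t.val = n ∧ g t = j
    · obtain ⟨t, ht, htj⟩ := hex
      have hlt : groupSize m K g n j < α := by
        have := hcap t
        rwa [ht, htj] at this
      have hle : groupSize m K g (n + 1) j ≤ groupSize m K g n j + 1 := by
        unfold groupSize
        have hsub : (Finset.univ.filter (fun i : Fin m => i.val < n + 1 ∧ g i = j)) ⊆
            (Finset.univ.filter (fun i : Fin m => i.val < n ∧ g i = j)) ∪ {t} := by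
          intro i hi
          simp only [mem_filter, mem_univ, true_and, mem_union, mem_singleton] at *
          rcases Nat.lt_succ_iff_lt_or_eq.mp hi.1 with h | h
          · exact Or.inl ⟨h, hi.2⟩
          · right
            exact Fin.ext (h.trans ht.symm)
        calc _ ≤ ((Finset.univ.filter (fun i : Fin m => i.val < n ∧ g i = j)) ∪ {t}).card :=
              Finset.card_le_card hsub
          _ ≤ _ := by
              refine (Finset.card_union_le _ _).trans ?_
              simp
      omega
    · push_neg at hex
      have heq : groupSize m K g (n + 1) j ≤ groupSize m K g n j := by
        apply Finset.card_le_card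
        intro i hi
        simp only [mem_filter, mem_univ, true_and] at *
        refine ⟨?_, hi.2⟩
        rcases Nat.lt_succ_iff_lt_or_eq.mp hi.1 with h | h
        · exact h
        · exact absurd hi.2 (hex i h)
      omega

lemma groupSize_sum (m K : ℕ) (g : Fin m → Fin K) :
    ∑ j : Fin K, groupSize m K g m j = m := by
  have h : ∀ j : Fin K, groupSize m K g m j =
      (Finset.univ.filter (fun i : Fin m => g i = j)).card := by
    intro j
    unfold groupSize
    congr 1
    apply Finset.filter_congr
    intro i _
    simp [i.isLt]
  simp_rw [h]
  have := Finset.card_eq_sum_card_fiberwise (f := g) (s := (Finset.univ : Finset (Fin m)))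
    (t := Finset.univ) (fun x _ => mem_univ _)
  simpa using this.symm

/-- **Correctness of the constraint-aware greedy assignment.** A greedy
procedure assigns the `m` points one at a time (point `t` goes to group `g t`),
only ever adding a point to a group currently holding fewer than `α` points
(`hcap`), and, whenever some group currently holds fewer than `k` points,
assigning the current point to such a lower-bound-deficient group (`hprio`).
Then, under the feasibility condition `K * k ≤ m ≤ K * α`, the final partition
satisfies `k ≤ |U_ỹ| ≤ α` for every group. -/
theorem greedy_assignment_correct (m K k α : ℕ)
    (hk : 1 ≤ k) (hkα : k ≤ α)
    (hlow : K * k ≤ m) (hhigh : m ≤ K * α)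
    (g : Fin m → Fin K)
    (hcap : ∀ t : Fin m, groupSize m K g t.val (g t) < α)
    (hprio : ∀ t : Fin m, (∃ j : Fin K, groupSize m K g t.val j < k) →
      groupSize m K g t.val (g t) < k) :
    ∀ j : Fin K, k ≤ groupSize m K g m j ∧ groupSize m K g m j ≤ α := by
  intro j0
  refine ⟨?_, groupSize_le_cap m K k α g hcap j0 m⟩
  by_contra hcon
  push_neg at hcon
  -- some group must have more than k points
  have hsum := groupSize_sum m K g
  have hex : ∃ j1 : Fin K, k < groupSize m K g m j1 := by
    by_contra hall
    push_neg at hall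
    have hlt : ∑ j : Fin K, groupSize m K g m j < ∑ _j : Fin K, k := by
      apply Finset.sum_lt_sum (fun j _ => hall j)
      exact ⟨j0, mem_univ _, hcon⟩
    simp only [Finset.sum_const, card_univ, Fintype.card_fin, smul_eq_mul] at hlt
    omega
  obtain ⟨j1, hj1⟩ := hex
  set S := Finset.univ.filter (fun i : Fin m => i.val < m ∧ g i = j1) with hS
  have hScard : k < S.card := hj1
  have hSne : S.Nonempty := Finset.card_pos.mp (by omega)
  obtain ⟨t, htS, htmax⟩ := S.exists_max_image (fun i => i.val) hSne
  have htj1 : g t = j1 := (Finset.mem_filter.mp htS).2.2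
  -- every other element of S is counted in groupSize at time t
  have hsub : S.erase t ⊆ Finset.univ.filter (fun i : Fin m => i.val < t.val ∧ g i = j1) := by
    intro i hi
    have hiS := Finset.mem_of_mem_erase hi
    have hine : i ≠ t := Finset.ne_of_mem_erase hi
    have hile : i.val ≤ t.val := htmax i hiS
    have : i.val < t.val := lt_of_le_of_ne hile (fun h => hine (Fin.ext h))
    simp only [mem_filter, mem_univ, true_and]
    exact ⟨this, (Finset.mem_filter.mp hiS).2.2⟩
  have hge : k ≤ groupSize m K g t.val j1 := by
    have h1 : S.card - 1 ≤ (S.erase t).card := by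
      rw [Finset.card_erase_of_mem htS]
    have h2 := Finset.card_le_card hsub
    unfold groupSize
    omega
  -- but j0 was deficient at time t, so hprio is violated
  have hdef : groupSize m K g t.val j0 < k :=
    lt_of_le_of_lt (groupSize_mono m K g (Nat.le_of_lt t.isLt) j0) hcon
  have := hprio t ⟨j0, hdef⟩
  rw [htj1] at this
  omega
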